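/- If a flat Plebeia tree t satisfies the structural invariants (SI1) and (SI2) and the subnode of t at position k exists and equals t', then t' satisfies the structural invariants and ⟦t'⟧(k') = ⟦t⟧(k ++ k') for every key k'. -/

import Mathlib

/-- A side is `L` or `R`. -/
inductive Side : Type
  | L | R
deriving DecidableEq, Repr

/-- A key is a list of sides. -/
abbrev Key := List Side

/-- The strict order `L < R` on sides. -/
def Side.lt : Side → Side → Prop := fun a b => a = Side.L ∧ b = Side.R

/-- The strict lexicographic order on keys induced by `L < R`. -/
def keyLt : Key → Key → Prop := List.Lex Side.lt

/-- A list of keys is prefix-free: for any two distinct keys in it,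
neither is a prefix of the other. -/
def PrefixFreeList (ks : List Key) : Prop :=
  List.Pairwise (fun a b => ¬ a <+: b ∧ ¬ b <+: a) ks

/-- A set of keys is prefix-free. -/
def PrefixFreeSet (S : Set Key) : Prop :=
  ∀ a ∈ S, ∀ b ∈ S, a ≠ b → ¬ a <+: b

/-- A list of keys is strictly increasing in the lexicographic order. -/
def SortedKeys (ks : List Key) : Prop := List.Pairwise keyLt ks

/-- Key list of an association list is prefix-free and strictly increasing. -/
def GoodKeyList (ks : List Key) : Prop := PrefixFreeList ks ∧ SortedKeys ks

/-- Prepend the key `s` to the key of every entry. -/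
def prependAll {β : Type _} (s : Key) (l : List (Key × β)) : List (Key × β) :=
  l.map (fun e => (s ++ e.1, e.2))

/-- `lookup l k` is `some` of the value of the first entry of `l` with key `k`. -/
def lookupA {β : Type _} (l : List (Key × β)) (k : Key) : Option β :=
  (l.find? (fun e => decide (e.1 = k))).map Prod.snd
/-- Flat Plebeia trees over a value type `α`. -/
inductive FNode (α : Type) : Type
  | leaf : α → FNode α
  | branch : FNode α → FNode α → FNode α
  | extender : Key → FNode α → FNode α

variable {α : Type}

def FNode.isExtender : FNode α → Prop
  | .extender _ _ => True
  | _ => False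

/-- The model `⟦t⟧ : key ⇀ α` of a flat Plebeia tree, as a function into `Option`. -/
def FNode.model : FNode α → Key → Option α
  | .leaf v, [] => some v
  | .leaf _, _ :: _ => none
  | .branch l _, Side.L :: k => l.model k
  | .branch _ r, Side.R :: k => r.model k
  | .branch _ _, [] => none
  | .extender s n, k => if s <+: k then n.model (k.drop s.length) else none

/-- `DOM t`: the set of keys on which `⟦t⟧` is defined. -/
def FNode.dom (t : FNode α) : Set Key := {k | (t.model k).isSome}

/-- Structural invariants (SI1), (SI2) at every subtree:
no extender has an extender as direct child, and no extender has an empty key. -/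
def FNode.inv : FNode α → Prop
  | .leaf _ => True
  | .branch l r => l.inv ∧ r.inv
  | .extender s n => (¬ n.isExtender) ∧ s ≠ [] ∧ n.inv

/-- The subnode of `t` at position `k` (a partial function). -/
def FNode.subAt : FNode α → Key → Option (FNode α)
  | t, [] => some t
  | .branch l _, Side.L :: k => l.subAt k
  | .branch _ r, Side.R :: k => r.subAt k
  | .extender s n, k => if s <+: k then n.subAt (k.drop s.length) else none
  | .leaf _, _ :: _ => none

namespace FNode

@[simp]
theorem model_extender_append (s k : Key) (n : FNode α) :
    (extender s n).model (s ++ k) = n.model k := by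
  simp [model]

theorem exists_append_of_subAt_extender_eq_some {s k : Key} {n t' : FNode α}
    (hk : k ≠ []) (hsub : (extender s n).subAt k = some t') :
    ∃ u, k = s ++ u ∧ n.subAt u = some t' := by
  obtain ⟨a, k, rfl⟩ := List.exists_cons_of_ne_nil hk
  simp only [subAt] at hsub
  split_ifs at hsub with hp
  obtain ⟨u, hu⟩ := hp
  exact ⟨u, hu.symm, by simpa [← hu] using hsub⟩

theorem model_eq_model_append_of_subAt_eq_some {t t' : FNode α} {k : Key}
    (hsub : t.subAt k = some t') (k' : Key) : t'.model k' = t.model (k ++ k') := by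
  induction t generalizing k with
  | leaf _ => cases k <;> simp_all [subAt]
  | branch l r ihl ihr =>
    match k, hsub with
    | [], hsub => simp_all [subAt]
    | .L :: k, hsub => exact ihl hsub
    | .R :: k, hsub => exact ihr hsub
  | extender s n ih =>
    rcases eq_or_ne k [] with rfl | hk
    · simp_all [subAt]
    obtain ⟨u, rfl, hu⟩ := exists_append_of_subAt_extender_eq_some hk hsub
    simp [ih hu]

theorem inv_of_subAt_eq_some {t t' : FNode α} {k : Key} (h : t.inv)
    (hsub : t.subAt k = some t') : t'.inv := by
  induction t generalizing k with
  | leaf _ => cases k <;> simp_all [subAt]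
  | branch l r ihl ihr =>
    match k, hsub with
    | [], hsub => simp_all [subAt]
    | .L :: k, hsub => exact ihl h.1 hsub
    | .R :: k, hsub => exact ihr h.2 hsub
  | extender s n ih =>
    rcases eq_or_ne k [] with rfl | hk
    · simp_all [subAt]
    obtain ⟨u, -, hu⟩ := exists_append_of_subAt_extender_eq_some hk hsub
    exact ih h.2.2 hu

end FNode

/-- if `t` satisfies the structural invariants (SI1), (SI2) and the
subnode of `t` at position `k` exists and equals `t'`, then `t'` satisfies the
structural invariants and `⟦t'⟧(k') = ⟦t⟧(k ++ k')` for every key `k'`. -/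
theorem stmt9 {α : Type} (t t' : FNode α) (k : Key) (h : t.inv)
    (hsub : t.subAt k = some t') :
    t'.inv ∧ ∀ k' : Key, t'.model k' = t.model (k ++ k') :=
  ⟨FNode.inv_of_subAt_eq_some h hsub, FNode.model_eq_model_append_of_subAt_eq_some hsub⟩
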